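/- If ν ≤ 1, z > 0, and x > 1, then K_ν(z, x) < x^{ν+1}/(z(x² − 1)) · exp(−(z/2)(x + 1/x)). -/

import Mathlib

/-! For `t > x > 1` we have `t^(ν-1) ≤ x^(ν-1)` and `1 - 1/x² < 1 - 1/t²`, so the
integrand `t^(ν-1) H^z(t)` is strictly below `x^(ν+1)/(x²-1) · (1 - 1/t²) H^z(t)`. The latter
is a constant times the derivative of `-(2/z) H^z`, which tends to `0` at infinity, so its
integral over `(x, ∞)` is `x^(ν+1)/(x²-1) · (2/z) H^z(x)`. -/

open Set MeasureTheory Filter Topology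

noncomputable def besselK (ν z x : ℝ) : ℝ :=
  (1 / 2) * ∫ t in Set.Ioi x, t ^ (ν - 1) * Real.exp (-(z / 2) * (t + 1 / t))

theorem setIntegral_lt_setIntegral_of_forall_lt {α : Type*} [MeasurableSpace α] {μ : Measure α}
    {s : Set α} {f g : α → ℝ} (hs : MeasurableSet s) (hμs : μ s ≠ 0)
    (hf : IntegrableOn f s μ) (hg : IntegrableOn g s μ) (hlt : ∀ x ∈ s, f x < g x) :
    ∫ x in s, f x ∂μ < ∫ x in s, g x ∂μ := by
  rw [← sub_pos, ← integral_sub hg hf, setIntegral_pos_iff_support_of_nonneg_ae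
    (ae_restrict_of_forall_mem hs fun x hx => (sub_pos.2 (hlt x hx)).le) (hg.sub hf)]
  rwa [inter_eq_right.2 fun x hx => Function.mem_support.2 (sub_pos.2 (hlt x hx)).ne',
    pos_iff_ne_zero]

theorem rpow_sub_one_lt_mul_one_sub_inv_sq {ν x t : ℝ} (hν : ν ≤ 1) (hx : 1 < x)
    (hxt : x < t) :
    t ^ (ν - 1) < x ^ (ν + 1) / (x ^ 2 - 1) * (1 - 1 / t ^ 2) := by
  have hx0 : 0 < x := by linarith
  have ht0 : 0 < t := by linarith
  have hmono : t ^ (ν - 1) ≤ x ^ (ν - 1) :=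
    Real.rpow_le_rpow_of_nonpos hx0 hxt.le (by linarith)
  have hratio : 1 < x ^ 2 / (x ^ 2 - 1) * (1 - 1 / t ^ 2) := by
    rw [div_mul_eq_mul_div, one_lt_div (by nlinarith), mul_one_sub, mul_one_div,
      sub_lt_sub_iff_left, div_lt_one (by positivity)]
    nlinarith
  calc t ^ (ν - 1) ≤ x ^ (ν - 1) := hmono
    _ < x ^ (ν - 1) * (x ^ 2 / (x ^ 2 - 1) * (1 - 1 / t ^ 2)) :=
      lt_mul_of_one_lt_right (Real.rpow_pos_of_pos hx0 _) hratio
    _ = x ^ (ν + 1) / (x ^ 2 - 1) * (1 - 1 / t ^ 2) := by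
      rw [show ν + 1 = ν - 1 + 2 by ring, Real.rpow_add hx0, Real.rpow_two]
      ring

/-- `H^z` in the notation of the paper. -/
noncomputable def besselWeight (z t : ℝ) : ℝ := Real.exp (-(z / 2) * (t + 1 / t))

theorem hasDerivAt_besselWeight (z : ℝ) {t : ℝ} (ht : t ≠ 0) :
    HasDerivAt (besselWeight z) (-(z / 2) * (1 - 1 / t ^ 2) * besselWeight z t) t := by
  have hsum : HasDerivAt (fun s : ℝ => s + 1 / s) (1 - 1 / t ^ 2) t := by
    simpa only [one_div, ← sub_eq_add_neg] using (hasDerivAt_id' t).fun_add (hasDerivAt_inv ht)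
  exact (hsum.const_mul (-(z / 2))).exp.congr_deriv (by rw [besselWeight]; ring)

theorem tendsto_besselWeight_atTop {z : ℝ} (hz : 0 < z) :
    Tendsto (besselWeight z) atTop (𝓝 0) := by
  have hsum : Tendsto (fun t : ℝ => t + 1 / t) atTop atTop :=
    tendsto_atTop_add_right_of_le' _ 0 tendsto_id
      ((eventually_gt_atTop 0).mono fun t ht => by positivity)
  exact Real.tendsto_exp_atBot.comp ((tendsto_const_mul_atBot_of_neg (by linarith)).2 hsum)

section
variable {z x t : ℝ}

theorem hasDerivAt_neg_two_div_mul_besselWeight (hz : z ≠ 0) (ht : t ≠ 0) :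
    HasDerivAt (fun s => -(2 / z) * besselWeight z s) ((1 - 1 / t ^ 2) * besselWeight z t) t := by
  refine ((hasDerivAt_besselWeight z ht).const_mul (-(2 / z))).congr_deriv ?_
  field_simp

theorem one_sub_inv_sq_mul_besselWeight_nonneg (ht : 1 ≤ t) :
    0 ≤ (1 - 1 / t ^ 2) * besselWeight z t := by
  have : 1 / t ^ 2 ≤ 1 := by rw [div_le_one (by positivity)]; nlinarith
  exact mul_nonneg (by linarith) (Real.exp_pos _).le

theorem integrableOn_one_sub_inv_sq_mul_besselWeight (hz : 0 < z) (hx : 1 ≤ x) :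
    IntegrableOn (fun t => (1 - 1 / t ^ 2) * besselWeight z t) (Ioi x) :=
  integrableOn_Ioi_deriv_of_nonneg'
    (fun t ht => hasDerivAt_neg_two_div_mul_besselWeight hz.ne' (by linarith [ht.out]))
    (fun t ht => one_sub_inv_sq_mul_besselWeight_nonneg (hx.trans ht.out.le))
    (by simpa using (tendsto_besselWeight_atTop hz).const_mul (-(2 / z)))

theorem integral_Ioi_one_sub_inv_sq_mul_besselWeight (hz : 0 < z) (hx : 1 ≤ x) :
    ∫ t in Ioi x, (1 - 1 / t ^ 2) * besselWeight z t = 2 / z * besselWeight z x := by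
  rw [integral_Ioi_of_hasDerivAt_of_nonneg'
    (fun t ht => hasDerivAt_neg_two_div_mul_besselWeight hz.ne' (by linarith [ht.out]))
    (fun t ht => one_sub_inv_sq_mul_besselWeight_nonneg (hx.trans ht.out.le))
    (by simpa using (tendsto_besselWeight_atTop hz).const_mul (-(2 / z)))]
  ring

end

theorem besselK_lt_Q (ν z x : ℝ) (hν : ν ≤ 1) (hz : 0 < z) (hx : 1 < x) :
    besselK ν z x < x ^ (ν + 1) / (z * (x ^ 2 - 1)) * Real.exp (-(z / 2) * (x + 1 / x)) := by
  set C := x ^ (ν + 1) / (x ^ 2 - 1) with hC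
  have hlt : ∀ t ∈ Ioi x,
      t ^ (ν - 1) * besselWeight z t < C * ((1 - 1 / t ^ 2) * besselWeight z t) := fun t ht => by
    rw [← mul_assoc]
    exact mul_lt_mul_of_pos_right (rpow_sub_one_lt_mul_one_sub_inv_sq hν hx ht) (Real.exp_pos _)
  have hg : IntegrableOn (fun t => C * ((1 - 1 / t ^ 2) * besselWeight z t)) (Ioi x) :=
    (integrableOn_one_sub_inv_sq_mul_besselWeight hz hx.le).const_mul C
  have hf : IntegrableOn (fun t => t ^ (ν - 1) * besselWeight z t) (Ioi x) := by
    refine hg.mono' (by unfold besselWeight; fun_prop) (ae_restrict_of_forall_mem measurableSet_Ioi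
      fun t ht => ?_)
    have ht0 : 0 < t := by linarith [ht.out]
    rw [Real.norm_of_nonneg (by unfold besselWeight; positivity)]
    exact (hlt t ht).le
  calc besselK ν z x = 1 / 2 * ∫ t in Ioi x, t ^ (ν - 1) * besselWeight z t := rfl
    _ < 1 / 2 * ∫ t in Ioi x, C * ((1 - 1 / t ^ 2) * besselWeight z t) := by
      gcongr
      exact setIntegral_lt_setIntegral_of_forall_lt measurableSet_Ioi (by simp) hf hg hlt
    _ = _ := by
      rw [integral_const_mul, integral_Ioi_one_sub_inv_sq_mul_besselWeight hz hx.le,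
        besselWeight, hC]
      field_simp
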